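/- arXiv:2106.03080 — 2 statements merged into one kernel-verified Lean document; each statement's English description precedes it below -/
import Mathlib

section
/- Let G be a finite simple connected graph of order n ≥ 3. Then ψ(G) = n − 1 if and only if G is isomorphic to K_n, K_{1,n−1}, K_{2,n−2}, or K_2 ∨ K̄_{n−2}. -/
open SimpleGraph

/-- Vertices `u, v` are doubly resolved by vertices `x, y` if
`d(u,x) − d(v,x) ≠ d(u,y) − d(v,y)`. -/
def doublyResolves {V : Type*} (G : SimpleGraph V) (x y u v : V) : Prop :=
  (G.dist u x : ℤ) - (G.dist v x : ℤ) ≠ (G.dist u y : ℤ) - (G.dist v y : ℤ)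

/-- A set `W` of vertices is a doubly resolving set for `G` if every two distinct
vertices of `G` are doubly resolved by some two vertices of `W`. -/
def IsDoublyResolvingSet {V : Type*} (G : SimpleGraph V) (W : Set V) : Prop :=
  ∀ u v : V, u ≠ v → ∃ x ∈ W, ∃ y ∈ W, doublyResolves G x y u v

/-- The doubly resolving number `ψ(G)`: the minimum cardinality of a doubly
resolving set for `G`. -/
noncomputable def psi {V : Type*} (G : SimpleGraph V) : ℕ :=
  sInf {k | ∃ W : Finset V, W.card = k ∧ IsDoublyResolvingSet G ↑W}

/-- The join `G ∨ H` of two graphs on disjoint vertex sets: it contains the edges of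
`G`, the edges of `H`, and all edges between vertices of `G` and vertices of `H`. -/
def graphJoin {α β : Type*} (G : SimpleGraph α) (H : SimpleGraph β) :
    SimpleGraph (α ⊕ β) where
  Adj x y := match x, y with
    | .inl a, .inl b => G.Adj a b
    | .inr a, .inr b => H.Adj a b
    | .inl _, .inr _ => True
    | .inr _, .inl _ => True
  symm := ⟨by
    rintro (a | a) (b | b) h
    · exact G.adj_symm h
    · trivial
    · trivial
    · exact H.adj_symm h⟩
  loopless := ⟨by
    rintro (a | a) h
    · exact G.irrefl h
    · exact H.irrefl h⟩

/-!
Deleting a pair `{a, b}` leaves a doubly resolving set unless some `u ≠ v` have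
`d(u, ·) - d(v, ·)` constant off `{a, b}`, so `ψ(G) = n - 1` says exactly that this happens for
every pair. Such `u, v` cannot both lie off `{a, b}`: either `{u, v} = {a, b}`, or one of `a, b`
reaches every vertex off `{a, b}` along a shortest path through a single vertex `w`, and then its
only possible neighbours are `w` and the other one of `a, b`. With a leaf this forces a star. With
minimum degree two a constant `d(a, ·) - d(b, ·)` must vanish, making `a, b` twins; a vertex with
exactly two neighbours `p, q` then forces every other vertex to have neighbourhood `{p, q}`, and if
there is no such vertex all pairs are twins and `G` is complete. Conversely, in the four graphs
every pair is a pair of twins or a center `a` with a non-center `b`, and then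
`d(b, ·) = d(v, ·) + 1` off `{a, b}`, where `v` is the other center.
-/

namespace SimpleGraph

variable {V W : Type*} {G : SimpleGraph V} {a b c l p q r s u v w x y : V}

def AreTwins (G : SimpleGraph V) (a b : V) : Prop :=
  ∀ x, x ≠ a → x ≠ b → (G.Adj a x ↔ G.Adj b x)

/-- For `p = q` this is the star `K_{1,n-1}`; for `p ≠ q` it is `K_{2,n-2}` or `K_2 ∨ K̄_{n-2}`,
according as `p` and `q` are adjacent. -/
def HasCenters (G : SimpleGraph V) (p q : V) : Prop :=
  ∀ x, x ≠ p → x ≠ q → ∀ y, G.Adj x y ↔ y = p ∨ y = q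

theorem Preconnected.mem_of_adj_closed (hG : G.Preconnected) {S : Set V}
    (hS : ∀ x y, x ∈ S → G.Adj x y → y ∈ S) (hx : x ∈ S) (y : V) : y ∈ S := by
  by_contra hy
  obtain ⟨p⟩ := hG x y
  obtain ⟨d, -, hd, hd'⟩ := p.exists_boundary_dart S hx hy
  exact hd' (hS _ _ hd d.adj)

theorem Connected.exists_adj_adj_of_three_le_card [Fintype V] (hG : G.Connected)
    (hn : 3 ≤ Fintype.card V) : ∃ a p q, p ≠ q ∧ G.Adj a p ∧ G.Adj a q := by
  classical
  by_contra! h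
  have : Nontrivial V := Fintype.one_lt_card_iff_nontrivial.mp (by omega)
  obtain ⟨a, u, hau⟩ : ∃ a u, G.Adj a u :=
    ⟨_, hG.preconnected.exists_adj_of_nontrivial (Classical.arbitrary V)⟩
  have hall : ∀ x, x ∈ ({a, u} : Set V) := by
    refine hG.preconnected.mem_of_adj_closed (x := a) ?_ (by simp)
    rintro x y (rfl | rfl) hxy
    · exact .inr (by_contra fun hne => h _ _ _ hne hxy hau)
    · exact .inl (by_contra fun hne => h _ _ _ hne hxy hau.symm)
  have : Fintype.card V ≤ ({a, u} : Finset V).card :=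
    Finset.card_le_card fun x _ => by simpa using hall x
  have := Finset.card_le_two (a := a) (b := u)
  omega

theorem dist_eq_two_of_adj_of_adj (huv : u ≠ v) (hnadj : ¬ G.Adj u v) (huw : G.Adj u w)
    (hwv : G.Adj w v) : G.dist u v = 2 := by
  have hlt := (huw.reachable.trans hwv.reachable).one_lt_dist_of_ne_of_not_adj huv hnadj
  have hle := G.dist_le (.cons huw (.cons hwv .nil))
  simp only [Walk.length_cons, Walk.length_nil] at hle
  omega

theorem Connected.dist_le_of_areTwins (hG : G.Connected) (htw : G.AreTwins a b) (hxa : x ≠ a)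
    (hxb : x ≠ b) : G.dist a x ≤ G.dist b x := by
  obtain ⟨p, hp⟩ := hG.exists_walk_length_eq_dist b x
  cases p with
  | nil => exact absurd rfl hxb
  | @cons _ y _ hby q =>
    rw [Walk.length_cons] at hp
    by_cases hya : y = a
    · subst hya
      have := G.dist_le q
      omega
    · have hay := (htw y hya (G.ne_of_adj hby).symm).mpr hby
      have := G.dist_le (.cons hay q)
      rw [Walk.length_cons] at this
      omega

theorem Connected.dist_eq_of_areTwins (hG : G.Connected) (htw : G.AreTwins a b) (hxa : x ≠ a)
    (hxb : x ≠ b) : G.dist a x = G.dist b x :=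
  (hG.dist_le_of_areTwins htw hxa hxb).antisymm
    (hG.dist_le_of_areTwins (fun z hzb hza => (htw z hza hzb).symm) hxb hxa)

theorem Connected.dist_eq_dist_add_one_of_leaf (hG : G.Connected) (hl : ∀ x, G.Adj l x ↔ x = c)
    (hy : y ≠ l) : G.dist y l = G.dist y c + 1 := by
  have hlc : G.dist c l = 1 := dist_eq_one_iff_adj.mpr ((hl c).mpr rfl).symm
  have hle : G.dist y l ≤ G.dist y c + G.dist c l := hG.dist_triangle
  obtain ⟨p, hp⟩ := hG.exists_walk_length_eq_dist l y
  cases p with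
  | nil => exact absurd rfl hy
  | @cons _ z _ hlz q =>
    obtain rfl := (hl z).mp hlz
    have := G.dist_le q
    rw [Walk.length_cons] at hp
    have := G.dist_comm (u := y) (v := l)
    have := G.dist_comm (u := y) (v := z)
    omega

theorem Connected.adj_eq_or_eq_of_dist_eq_add (hG : G.Connected) (hwa : w ≠ a)
    (h : ∀ x, x ≠ a → x ≠ b → G.dist a x = G.dist a w + G.dist w x) (hax : G.Adj a x) :
    x = b ∨ x = w := by
  by_contra! hx
  have := h x (G.ne_of_adj hax).symm hx.1
  rw [dist_eq_one_iff_adj.mpr hax] at this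
  have := hG.pos_dist_of_ne hwa.symm
  have := hG.pos_dist_of_ne hx.2.symm
  omega

theorem doublyResolves_swap (h : doublyResolves G x y u v) : doublyResolves G x y v u :=
  fun h' => h (by omega)

theorem Connected.doublyResolves_self (hG : G.Connected) (huv : u ≠ v) :
    doublyResolves G u v u v := by
  have := hG.pos_dist_of_ne huv
  unfold doublyResolves
  rw [dist_self, dist_self, dist_comm (u := v)]
  omega

theorem _root_.IsDoublyResolvingSet.mono {S T : Set V} (h : IsDoublyResolvingSet G S)
    (hST : S ⊆ T) : IsDoublyResolvingSet G T := fun u v huv =>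
  let ⟨x, hx, y, hy, hxy⟩ := h u v huv
  ⟨x, hST hx, y, hST hy, hxy⟩

theorem Connected.isDoublyResolvingSet_univ (hG : G.Connected) :
    IsDoublyResolvingSet G Set.univ :=
  fun u v huv => ⟨u, trivial, v, trivial, hG.doublyResolves_self huv⟩

theorem Connected.isDoublyResolvingSet_compl_singleton (hG : G.Connected) (hp : G.Adj a p)
    (hq : G.Adj a q) (hpq : p ≠ q) : IsDoublyResolvingSet G {a}ᶜ := by
  have resolves_a : ∀ v, v ≠ a → ∃ x ∈ ({a}ᶜ : Set V), ∃ y ∈ ({a}ᶜ : Set V),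
      doublyResolves G x y a v := by
    intro v hva
    obtain ⟨y, hay, hyv⟩ : ∃ y, G.Adj a y ∧ y ≠ v := by
      by_cases hpv : p = v
      · exact ⟨q, hq, hpv ▸ hpq.symm⟩
      · exact ⟨p, hp, hpv⟩
    refine ⟨v, hva, y, (G.ne_of_adj hay).symm, ?_⟩
    have := hG.pos_dist_of_ne hva.symm
    have := hG.pos_dist_of_ne hyv.symm
    unfold doublyResolves
    rw [dist_self, dist_eq_one_iff_adj.mpr hay]
    omega
  intro u v huv
  by_cases hu : u = a
  · exact hu ▸ resolves_a v (hu ▸ huv).symm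
  by_cases hv : v = a
  · obtain ⟨x, hx, y, hy, h⟩ := resolves_a u hu
    exact ⟨x, hx, y, hy, doublyResolves_swap (hv ▸ h)⟩
  exact ⟨u, hu, v, hv, hG.doublyResolves_self huv⟩

theorem Connected.psi_le_card_sub_one [Fintype V] (hG : G.Connected) (hn : 3 ≤ Fintype.card V) :
    psi G ≤ Fintype.card V - 1 := by
  classical
  obtain ⟨a, p, q, hpq, hp, hq⟩ := hG.exists_adj_adj_of_three_le_card hn
  exact Nat.sInf_le ⟨{a}ᶜ, by simp [Finset.card_compl],
    by simpa using hG.isDoublyResolvingSet_compl_singleton hp hq hpq⟩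

theorem Connected.psi_eq_card_sub_one_iff [Fintype V] (hG : G.Connected)
    (hn : 3 ≤ Fintype.card V) :
    psi G = Fintype.card V - 1 ↔ ∀ a b, a ≠ b → ¬ IsDoublyResolvingSet G {a, b}ᶜ := by
  classical
  constructor
  · intro hψ a b hab hW
    have : psi G ≤ Fintype.card V - 2 := Nat.sInf_le ⟨{a, b}ᶜ,
      by rw [Finset.card_compl, Finset.card_pair hab],
      by rwa [Finset.coe_compl, Finset.coe_pair]⟩
    omega
  · intro hbad
    refine (hG.psi_le_card_sub_one hn).antisymm ?_
    obtain ⟨S, hScard, hS⟩ :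
        psi G ∈ {k | ∃ S : Finset V, S.card = k ∧ IsDoublyResolvingSet G ↑S} :=
      Nat.sInf_mem ⟨_, Finset.univ, rfl, by simpa using hG.isDoublyResolvingSet_univ⟩
    by_contra! hlt
    obtain ⟨a, ha, b, hb, hab⟩ := Finset.one_lt_card.mp
      (show 1 < Sᶜ.card by rw [Finset.card_compl]; omega)
    refine hbad a b hab (hS.mono fun x hx => ?_)
    simp only [Finset.mem_compl] at ha hb
    rintro (rfl | rfl) <;> contradiction

theorem exists_of_not_isDoublyResolvingSet_compl_pair
    (h : ¬ IsDoublyResolvingSet G {a, b}ᶜ) :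
    ∃ u v, u ≠ v ∧ ∀ x, x ≠ a → x ≠ b → ∀ y, y ≠ a → y ≠ b →
      (G.dist u x : ℤ) - G.dist v x = G.dist u y - G.dist v y := by
  simpa [IsDoublyResolvingSet, doublyResolves] using h

theorem Connected.dist_sub_const_or_dist_eq_add (hG : G.Connected)
    (h : ¬ IsDoublyResolvingSet G {a, b}ᶜ) :
    (∀ x, x ≠ a → x ≠ b → ∀ y, y ≠ a → y ≠ b →
      (G.dist a x : ℤ) - G.dist b x = G.dist a y - G.dist b y) ∨
    (∃ w, w ≠ a ∧ w ≠ b ∧ ∀ x, x ≠ a → x ≠ b → G.dist a x = G.dist a w + G.dist w x) ∨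
    (∃ w, w ≠ b ∧ w ≠ a ∧ ∀ x, x ≠ b → x ≠ a → G.dist b x = G.dist b w + G.dist w x) := by
  obtain ⟨u, v, huv, h⟩ := exists_of_not_isDoublyResolvingSet_compl_pair h
  have h' : ∀ x, x ≠ a → x ≠ b → ∀ y, y ≠ a → y ≠ b →
      (G.dist v x : ℤ) - G.dist u x = G.dist v y - G.dist u y := fun x hxa hxb y hya hyb => by
    have := h x hxa hxb y hya hyb
    omega
  have through : ∀ u v, (∀ x, x ≠ a → x ≠ b → ∀ y, y ≠ a → y ≠ b →
      (G.dist u x : ℤ) - G.dist v x = G.dist u y - G.dist v y) → v ≠ a → v ≠ b →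
      ∀ x, x ≠ a → x ≠ b → G.dist u x = G.dist u v + G.dist v x := by
    intro u v h hva hvb x hxa hxb
    have := h x hxa hxb v hva hvb
    rw [dist_self] at this
    omega
  by_cases hu : u = a ∨ u = b <;> by_cases hv : v = a ∨ v = b
  · left
    rcases hu with rfl | rfl <;> rcases hv with rfl | rfl
    · exact absurd rfl huv
    · exact h
    · exact h'
    · exact absurd rfl huv
  · push Not at hv
    rcases hu with rfl | rfl
    · exact .inr (.inl ⟨v, hv.1, hv.2, through u v h hv.1 hv.2⟩)
    · exact .inr (.inr ⟨v, hv.2, hv.1, fun x hxb hxa => through u v h hv.1 hv.2 x hxa hxb⟩)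
  · push Not at hu
    rcases hv with rfl | rfl
    · exact .inr (.inl ⟨u, hu.1, hu.2, through v u h' hu.1 hu.2⟩)
    · exact .inr (.inr ⟨u, hu.2, hu.1, fun x hxb hxa => through v u h' hu.1 hu.2 x hxa hxb⟩)
  · push Not at hu hv
    have := through u v h hv.1 hv.2 u hu.1 hu.2
    rw [dist_self, dist_comm (u := v)] at this
    exfalso
    exact huv (hG.dist_eq_zero_iff.mp (by omega))

theorem Connected.eq_of_adj_of_adj_of_leaf (hG : G.Connected)
    (hbad : ∀ a b, a ≠ b → ¬ IsDoublyResolvingSet G {a, b}ᶜ) (hl : ∀ x, G.Adj l x ↔ x = c)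
    (hcb : G.Adj c b) (hby : G.Adj b y) : y = c := by
  by_cases hbl : b = l
  · exact (hl y).mp (hbl ▸ hby)
  by_contra hyc
  have hlc : G.Adj l c := (hl c).mpr rfl
  have hbc : b ≠ c := (G.ne_of_adj hcb).symm
  have hyb : y ≠ b := (G.ne_of_adj hby).symm
  have hyl : y ≠ l := fun h => hbc ((hl b).mp (h ▸ hby.symm))
  have dcl : G.dist c l = 1 := dist_eq_one_iff_adj.mpr hlc.symm
  have dby : G.dist b y = 1 := dist_eq_one_iff_adj.mpr hby
  have dbl : G.dist b l = 2 := by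
    rw [hG.dist_eq_dist_add_one_of_leaf hl hbl, dist_eq_one_iff_adj.mpr hcb.symm]
  have dyl := hG.dist_eq_dist_add_one_of_leaf hl hyl
  have dcy := hG.pos_dist_of_ne (Ne.symm hyc)
  rcases hG.dist_sub_const_or_dist_eq_add (hbad c b hbc.symm) with
    hconst | ⟨w, hwc, -, hw⟩ | ⟨w, hwb, -, hw⟩
  · -- `d(c, ·) - d(b, ·)` is `-1` at `l` but nonnegative at `y`
    have := hconst l (G.ne_of_adj hlc) (Ne.symm hbl) y hyc hyb
    omega
  · -- `w = l`, and then `d(c, y) = 1 + d(l, y) = d(c, y) + 2`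
    obtain rfl : l = w :=
      (hG.adj_eq_or_eq_of_dist_eq_add hwc hw hlc.symm).resolve_left (Ne.symm hbl)
    have := hw y hyc hyb
    rw [dist_comm (u := l), dyl, dist_comm (u := y)] at this
    omega
  · -- `w = y`, and then `d(b, l) = 1 + d(y, l) ≥ 3`
    obtain rfl : y = w := (hG.adj_eq_or_eq_of_dist_eq_add hwb hw hby).resolve_left hyc
    have := hw l (Ne.symm hbl) (G.ne_of_adj hlc)
    rw [dyl, dist_comm (u := y)] at this
    omega

theorem Connected.hasCenters_of_leaf (hG : G.Connected)
    (hbad : ∀ a b, a ≠ b → ¬ IsDoublyResolvingSet G {a, b}ᶜ) (hl : ∀ x, G.Adj l x ↔ x = c) :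
    G.HasCenters c c := by
  have hstar : ∀ {b y}, G.Adj c b → G.Adj b y → y = c :=
    fun hcb hby => hG.eq_of_adj_of_adj_of_leaf hbad hl hcb hby
  have hadj : ∀ x, x = c ∨ G.Adj c x := by
    refine hG.preconnected.mem_of_adj_closed (S := {x | x = c ∨ G.Adj c x}) ?_ (.inl rfl)
    rintro x y (rfl | hcx) hxy
    · exact .inr hxy
    · exact .inl (hstar hcx hxy)
  intro x hxc _ y
  have hcx := (hadj x).resolve_left hxc
  rw [or_self]
  exact ⟨hstar hcx, fun h => h ▸ hcx.symm⟩

section MinDegreeTwo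

variable (hG : G.Connected) (hδ : ∀ z b, ∃ x, G.Adj z x ∧ x ≠ b)
  (hbad : ∀ a b, a ≠ b → ¬ IsDoublyResolvingSet G {a, b}ᶜ)
include hG hδ

theorem Connected.areTwins_or_adj_subset (h : ¬ IsDoublyResolvingSet G {a, b}ᶜ) :
    G.AreTwins a b ∨ (∃ w, ∀ x, G.Adj a x → x = b ∨ x = w) ∨
      (∃ w, ∀ x, G.Adj b x → x = a ∨ x = w) := by
  rcases hG.dist_sub_const_or_dist_eq_add h with hconst | ⟨w, hwa, -, hw⟩ | ⟨w, hwb, -, hw⟩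
  · -- the constant is `≤ 0` at a neighbour of `a` and `≥ 0` at a neighbour of `b`, so it is `0`
    left
    obtain ⟨x₀, hax₀, hx₀b⟩ := hδ a b
    obtain ⟨y₀, hby₀, hy₀a⟩ := hδ b a
    have h₀ := hconst x₀ (G.ne_of_adj hax₀).symm hx₀b y₀ hy₀a (G.ne_of_adj hby₀).symm
    rw [dist_eq_one_iff_adj.mpr hax₀, dist_eq_one_iff_adj.mpr hby₀] at h₀
    have := hG.pos_dist_of_ne hx₀b.symm
    have := hG.pos_dist_of_ne hy₀a.symm
    intro x hxa hxb
    have := hconst x hxa hxb x₀ (G.ne_of_adj hax₀).symm hx₀b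
    rw [dist_eq_one_iff_adj.mpr hax₀] at this
    rw [← dist_eq_one_iff_adj, ← dist_eq_one_iff_adj, show G.dist a x = G.dist b x by omega]
  · exact .inr (.inl ⟨w, fun x => hG.adj_eq_or_eq_of_dist_eq_add hwa hw⟩)
  · exact .inr (.inr ⟨w, fun x => hG.adj_eq_or_eq_of_dist_eq_add hwb hw⟩)

include hbad

theorem Connected.hasCenters_of_adj_subset (ha : ∀ x, G.Adj a x → x = r ∨ x = s) :
    G.HasCenters r s := by
  obtain ⟨z, haz, hzr⟩ := hδ a r
  have has : G.Adj a s := (ha z haz).resolve_left hzr ▸ haz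
  have hrs : r ≠ s := by
    rintro rfl
    exact hzr ((ha z haz).elim id id)
  obtain ⟨z', haz', hz's⟩ := hδ a s
  have har : G.Adj a r := (ha z' haz').resolve_right hz's ▸ haz'
  have hN : ∀ y, G.Adj a y ↔ y = r ∨ y = s := fun y => ⟨ha y, by rintro (rfl | rfl) <;> assumption⟩
  intro x hxr hxs y
  by_cases hxa : x = a
  · exact hxa ▸ hN y
  have hax : ¬ G.Adj a x := fun h => (ha x h).elim hxr hxs
  -- the non-adjacent pair `{a, x}` can only be a pair of twins, so `x` shares the neighbours of `a`
  rcases hG.areTwins_or_adj_subset hδ (hbad a x (Ne.symm hxa)) with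
    htw | ⟨w, hw⟩ | ⟨w, hw⟩
  · by_cases hya : y = a
    · subst hya
      exact iff_of_false (fun h => hax h.symm) (by rintro (rfl | rfl) <;> exact G.irrefl ‹_›)
    by_cases hyx : y = x
    · subst hyx
      exact iff_of_false (G.irrefl) (by tauto)
    rw [← htw y hya hyx, hN]
  · obtain rfl := (hw r har).resolve_left (Ne.symm hxr)
    exact (hrs ((hw s has).resolve_left (Ne.symm hxs)).symm).elim
  · obtain ⟨z, hxz, hzw⟩ := hδ x w
    have hza : z = a := (hw z hxz).resolve_right hzw
    exact (hax (hza ▸ hxz).symm).elim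

theorem Connected.eq_top_or_hasCenters_of_minDegree_two :
    G = ⊤ ∨ ∃ p q, G.HasCenters p q := by
  by_cases hsmall : ∃ a r s, ∀ x, G.Adj a x → x = r ∨ x = s
  · obtain ⟨a, r, s, ha⟩ := hsmall
    exact .inr ⟨r, s, hG.hasCenters_of_adj_subset hδ hbad ha⟩
  push Not at hsmall
  have htw : ∀ a b, a ≠ b → G.AreTwins a b := fun a b hab => by
    rcases hG.areTwins_or_adj_subset hδ (hbad a b hab) with htw | ⟨w, hw⟩ | ⟨w, hw⟩
    · exact htw
    · obtain ⟨x, hax, hx⟩ := hsmall a b w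
      exact ((hw x hax).elim hx.1 hx.2).elim
    · obtain ⟨x, hbx, hx⟩ := hsmall b a w
      exact ((hw x hbx).elim hx.1 hx.2).elim
  left
  ext x y
  refine ⟨G.ne_of_adj, fun hxy => ?_⟩
  obtain ⟨m, hxm, hmy⟩ := hδ x y
  have hym := (htw x y hxy m (G.ne_of_adj hxm).symm hmy).mp hxm
  exact (htw x m (G.ne_of_adj hxm) y hxy.symm hmy.symm).mpr hym.symm

end MinDegreeTwo

theorem Connected.eq_top_or_hasCenters [Nontrivial V] (hG : G.Connected)
    (hbad : ∀ a b, a ≠ b → ¬ IsDoublyResolvingSet G {a, b}ᶜ) :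
    G = ⊤ ∨ ∃ p q, G.HasCenters p q := by
  by_cases hleaf : ∃ l c, ∀ x, G.Adj l x ↔ x = c
  · obtain ⟨l, c, hl⟩ := hleaf
    exact .inr ⟨c, c, hG.hasCenters_of_leaf hbad hl⟩
  refine hG.eq_top_or_hasCenters_of_minDegree_two (fun z b => ?_) hbad
  by_contra! h
  obtain ⟨y, hzy⟩ := hG.preconnected.exists_adj_of_nontrivial z
  exact hleaf ⟨z, b, fun x => ⟨h x, fun hx => hx ▸ h y hzy ▸ hzy⟩⟩

theorem not_isDoublyResolvingSet_of_dist_sub_eq {S : Set V} {k : ℤ} (huv : u ≠ v)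
    (h : ∀ x ∈ S, (G.dist u x : ℤ) - G.dist v x = k) : ¬ IsDoublyResolvingSet G S := fun hS =>
  let ⟨x, hx, y, hy, hxy⟩ := hS u v huv
  hxy ((h x hx).trans (h y hy).symm)

theorem Connected.not_isDoublyResolvingSet_compl_pair_of_areTwins (hG : G.Connected)
    (hab : a ≠ b) (htw : G.AreTwins a b) : ¬ IsDoublyResolvingSet G {a, b}ᶜ :=
  not_isDoublyResolvingSet_of_dist_sub_eq (k := 0) hab fun x hx => by
    simp only [Set.mem_compl_iff, Set.mem_insert_iff, Set.mem_singleton_iff, not_or] at hx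
    rw [hG.dist_eq_of_areTwins htw hx.1 hx.2, sub_self]

theorem not_isDoublyResolvingSet_compl_pair_of_adj_subset (hbv : G.Adj b v)
    (hb : ∀ x, G.Adj b x → x = a ∨ x = v) (hv : ∀ x, x ≠ a → x ≠ b → x ≠ v → G.Adj v x) :
    ¬ IsDoublyResolvingSet G {a, b}ᶜ :=
  not_isDoublyResolvingSet_of_dist_sub_eq (k := 1) (G.ne_of_adj hbv) fun x hx => by
    simp only [Set.mem_compl_iff, Set.mem_insert_iff, Set.mem_singleton_iff, not_or] at hx
    by_cases hxv : x = v
    · subst hxv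
      rw [dist_eq_one_iff_adj.mpr hbv, dist_self]
      rfl
    · have hvx := hv x hx.1 hx.2 hxv
      rw [dist_eq_two_of_adj_of_adj (Ne.symm hx.2) (fun h => (hb x h).elim hx.1 hxv) hbv hvx,
        dist_eq_one_iff_adj.mpr hvx]
      rfl

theorem HasCenters.symm (hC : G.HasCenters p q) : G.HasCenters q p := fun x hxq hxp y => by
  rw [hC x hxp hxq, or_comm]

theorem HasCenters.not_isDoublyResolvingSet_compl_pair_left (hC : G.HasCenters p q)
    (hbp : b ≠ p) (hbq : b ≠ q) : ¬ IsDoublyResolvingSet G {p, b}ᶜ :=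
  not_isDoublyResolvingSet_compl_pair_of_adj_subset ((hC b hbp hbq q).mpr (.inr rfl))
    (fun x => (hC b hbp hbq x).mp) fun x hxp _ hxq => ((hC x hxp hxq q).mpr (.inr rfl)).symm

theorem Connected.not_isDoublyResolvingSet_compl_pair_of_hasCenters (hG : G.Connected)
    (hC : G.HasCenters p q) (hab : a ≠ b) : ¬ IsDoublyResolvingSet G {a, b}ᶜ := by
  by_cases ha : a = p ∨ a = q <;> by_cases hb : b = p ∨ b = q
  · refine hG.not_isDoublyResolvingSet_compl_pair_of_areTwins hab fun x hxa hxb => ?_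
    have hx : x ≠ p ∧ x ≠ q := by
      rcases ha with rfl | rfl <;> rcases hb with rfl | rfl <;> tauto
    exact iff_of_true ((hC x hx.1 hx.2 a).mpr ha).symm ((hC x hx.1 hx.2 b).mpr hb).symm
  · push Not at hb
    rcases ha with rfl | rfl
    · exact hC.not_isDoublyResolvingSet_compl_pair_left hb.1 hb.2
    · exact hC.symm.not_isDoublyResolvingSet_compl_pair_left hb.2 hb.1
  · push Not at ha
    rw [Set.pair_comm]
    rcases hb with rfl | rfl
    · exact hC.not_isDoublyResolvingSet_compl_pair_left ha.1 ha.2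
    · exact hC.symm.not_isDoublyResolvingSet_compl_pair_left ha.2 ha.1
  · push Not at ha hb
    refine hG.not_isDoublyResolvingSet_compl_pair_of_areTwins hab fun x _ _ => ?_
    rw [hC a ha.1 ha.2, hC b hb.1 hb.2]

theorem eq_top_of_iso_top (e : G ≃g (⊤ : SimpleGraph W)) : G = ⊤ := by
  ext x y
  rw [← e.map_adj_iff, top_adj, top_adj, e.injective.ne_iff]

theorem HasCenters.comap {H : SimpleGraph W} {p q : W} (hC : H.HasCenters p q) (e : G ≃g H) :
    G.HasCenters (e.symm p) (e.symm q) := by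
  have he : ∀ x r, x = e.symm r ↔ e x = r := fun x r => by rw [eq_comm, e.symm_apply_eq, eq_comm]
  intro x hxp hxq y
  rw [← e.map_adj_iff, hC (e x) (by rwa [ne_eq, ← he]) (by rwa [ne_eq, ← he]), he, he]

theorem _root_.Fintype.exists_equiv_apply_eq_and_apply_eq [Fintype V] [Fintype W]
    (h : Fintype.card V = Fintype.card W) {p q : V} {p' q' : W} (hpq : p = q ↔ p' = q') :
    ∃ φ : V ≃ W, φ p = p' ∧ φ q = q' := by
  classical
  obtain ⟨f⟩ := Fintype.card_eq.mp h
  set g := f.trans (Equiv.swap (f p) p')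
  have hg : g p = p' := by simp [g]
  refine ⟨g.trans (Equiv.swap (g q) q'), ?_, by simp⟩
  rw [Equiv.trans_apply, hg]
  by_cases h : p = q
  · subst h
    rw [hg, ← hpq.mp rfl, Equiv.swap_self, Equiv.refl_apply]
  · exact Equiv.swap_apply_of_ne_of_ne (hg ▸ g.injective.ne h) (mt hpq.mpr h)

theorem HasCenters.nonempty_iso [Fintype V] [Fintype W] {H : SimpleGraph W} {p' q' : W}
    (hG : G.HasCenters p q) (hH : H.HasCenters p' q') (hcard : Fintype.card V = Fintype.card W)
    (hpq : p = q ↔ p' = q') (hadj : G.Adj p q ↔ H.Adj p' q') : Nonempty (G ≃g H) := by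
  obtain ⟨φ, hp, hq⟩ := Fintype.exists_equiv_apply_eq_and_apply_eq hcard hpq
  have hφ : ∀ z, φ z ≠ p' ∧ φ z ≠ q' ↔ z ≠ p ∧ z ≠ q := fun z => by
    rw [← hp, ← hq, φ.injective.ne_iff, φ.injective.ne_iff]
  refine ⟨⟨φ, fun {x y} => ?_⟩⟩
  by_cases hx : x ≠ p ∧ x ≠ q
  · obtain ⟨hx₁, hx₂⟩ := (hφ x).mpr hx
    rw [hH _ hx₁ hx₂, hG _ hx.1 hx.2, ← hp, ← hq, φ.injective.eq_iff, φ.injective.eq_iff]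
  by_cases hy : y ≠ p ∧ y ≠ q
  · obtain ⟨hy₁, hy₂⟩ := (hφ y).mpr hy
    rw [adj_comm, hH _ hy₁ hy₂, adj_comm, hG _ hy.1 hy.2, ← hp, ← hq, φ.injective.eq_iff,
      φ.injective.eq_iff]
  have hadj' : G.Adj q p ↔ H.Adj q' p' := by rw [G.adj_comm, hadj, H.adj_comm]
  rw [not_and_or, not_ne_iff, not_ne_iff] at hx hy
  rcases hx with rfl | rfl <;> rcases hy with rfl | rfl <;> simp [hp, hq, hadj, hadj']

theorem hasCenters_completeBipartiteGraph_fin_one (m : ℕ) :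
    (completeBipartiteGraph (Fin 1) (Fin m)).HasCenters (.inl 0) (.inl 0) := by
  rintro (i | j) h _ y
  · exact absurd (by rw [Subsingleton.elim i 0]) h
  rcases y with k | k
  · simp [completeBipartiteGraph, Subsingleton.elim k 0]
  · simp [completeBipartiteGraph]

theorem hasCenters_completeBipartiteGraph_fin_two (m : ℕ) :
    (completeBipartiteGraph (Fin 2) (Fin m)).HasCenters (.inl 0) (.inl 1) := by
  rintro (i | j) h₀ h₁ y
  · fin_cases i <;> contradiction
  rcases y with k | k
  · fin_cases k <;> simp [completeBipartiteGraph]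
  · simp [completeBipartiteGraph]

theorem hasCenters_graphJoin (m : ℕ) :
    (graphJoin (completeGraph (Fin 2)) (⊥ : SimpleGraph (Fin m))).HasCenters (.inl 0) (.inl 1) := by
  rintro (i | j) h₀ h₁ y
  · fin_cases i <;> contradiction
  rcases y with k | k
  · fin_cases k <;> simp [graphJoin]
  · simp [graphJoin]

end SimpleGraph

/-- A connected graph `G` of order `n ≥ 3` satisfies `ψ(G) = n − 1` if and only if
`G` is `K_n`, `K_{1,n−1}`, `K_{2,n−2}`, or `K_2 ∨ K̄_{n−2}`. -/
theorem stmt_9 {V : Type*} [Fintype V] (G : SimpleGraph V)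
    (hG : G.Connected) (hn : 3 ≤ Fintype.card V) :
    psi G = Fintype.card V - 1 ↔
      (Nonempty (G ≃g completeGraph (Fin (Fintype.card V))) ∨
       Nonempty (G ≃g completeBipartiteGraph (Fin 1) (Fin (Fintype.card V - 1))) ∨
       Nonempty (G ≃g completeBipartiteGraph (Fin 2) (Fin (Fintype.card V - 2))) ∨
       Nonempty (G ≃g
         graphJoin (completeGraph (Fin 2)) (⊥ : SimpleGraph (Fin (Fintype.card V - 2))))) := by
  have : Nontrivial V := Fintype.one_lt_card_iff_nontrivial.mp (by omega)
  have card₁ : Fintype.card V = Fintype.card (Fin 1 ⊕ Fin (Fintype.card V - 1)) := by simp; omega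
  have card₂ : Fintype.card V = Fintype.card (Fin 2 ⊕ Fin (Fintype.card V - 2)) := by simp; omega
  rw [hG.psi_eq_card_sub_one_iff hn]
  constructor
  · intro hbad
    rcases hG.eq_top_or_hasCenters hbad with rfl | ⟨p, q, hC⟩
    · exact .inl ⟨Iso.completeGraph (Fintype.equivFin V)⟩
    obtain rfl | hpq := eq_or_ne p q
    · exact .inr (.inl (hC.nonempty_iso (hasCenters_completeBipartiteGraph_fin_one _) card₁
        (iff_of_true rfl rfl) (iff_of_false G.irrefl (by simp [completeBipartiteGraph]))))
    by_cases hadj : G.Adj p q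
    · exact .inr (.inr (.inr (hC.nonempty_iso (hasCenters_graphJoin _) card₂
        (iff_of_false hpq (by simp)) (iff_of_true hadj (by simp [graphJoin])))))
    · exact .inr (.inr (.inl (hC.nonempty_iso (hasCenters_completeBipartiteGraph_fin_two _) card₂
        (iff_of_false hpq (by simp)) (iff_of_false hadj (by simp [completeBipartiteGraph])))))
  · intro hiso a b hab
    rcases hiso with ⟨⟨e⟩⟩ | ⟨⟨e⟩⟩ | ⟨⟨e⟩⟩ | ⟨⟨e⟩⟩
    · obtain rfl := eq_top_of_iso_top e
      exact hG.not_isDoublyResolvingSet_compl_pair_of_areTwins hab fun x hxa hxb =>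
        iff_of_true (Ne.symm hxa) (Ne.symm hxb)
    · exact hG.not_isDoublyResolvingSet_compl_pair_of_hasCenters
        ((hasCenters_completeBipartiteGraph_fin_one _).comap e) hab
    · exact hG.not_isDoublyResolvingSet_compl_pair_of_hasCenters
        ((hasCenters_completeBipartiteGraph_fin_two _).comap e) hab
    · exact hG.not_isDoublyResolvingSet_compl_pair_of_hasCenters
        ((hasCenters_graphJoin _).comap e) hab
end

section
/- Let G be a finite simple connected unicyclic graph with unique cycle C(G), and let W be a doubly resolving set for the cycle C(G) (viewed as a graph with its own cycle distance). If U is the set of vertices of W that have degree 2 in G, then L(G) ∪ U is a doubly resolving set for G, where L(G) is the set of leaves of G. -/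
open SimpleGraph

/-!
In a unicyclic graph every edge off the cycle is a bridge, the cycle has no chords and is
isometric, and every vertex `u` has a gate on the cycle: the vertex where the tree containing `u`
is attached, through which `u` sees the whole cycle. A vertex `w` of `W` of degree 2 is kept; if
its degree is larger, a tree hangs at `w`, and a leaf of that tree sees every vertex outside it
through `w`, so it can replace `w`. These proxies resolve two cycle vertices exactly as `W` does
in the cycle. If `u` is off the cycle, then (swapping `u` and `v` when `v` lies behind `u`) a leaf
`ℓ` beyond `u` as seen from `v` gives `d(u, ℓ) - d(v, ℓ) = -d(u, v)`, whereas the proxy of a vertex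
of `W` other than the gate of `u` gives a strictly larger difference.
-/

namespace SimpleGraph

variable {V : Type*} {G : SimpleGraph V}

theorem doublyResolves_comm {x y u v : V} :
    doublyResolves G x y v u ↔ doublyResolves G x y u v := by
  unfold doublyResolves
  omega

theorem IsDoublyResolvingSet.nontrivial {W : Set V} (hW : IsDoublyResolvingSet G W) {u v : V}
    (huv : u ≠ v) : W.Nontrivial := by
  obtain ⟨x, hx, y, hy, hres⟩ := hW u v huv
  exact ⟨x, hx, y, hy, by rintro rfl; exact hres rfl⟩

theorem Connected.exists_adj_dist_add_one_eq (hG : G.Connected) {u v : V} (huv : u ≠ v) :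
    ∃ g, G.Adj u g ∧ G.dist g v + 1 = G.dist u v := by
  obtain ⟨p, -, hp⟩ := hG.exists_path_of_dist u v
  cases p with
  | nil => exact absurd rfl huv
  | @cons _ g _ h q =>
    refine ⟨g, h, le_antisymm ?_ ?_⟩
    · have := dist_le q
      rw [Walk.length_cons] at hp
      omega
    · have := hG.dist_triangle (u := u) (v := g) (w := v)
      rw [dist_eq_one_iff_adj.mpr h] at this
      omega

theorem Connected.dist_eq_add_of_forall_mem_support (hG : G.Connected) {x y m : V}
    (h : ∀ p : G.Walk x y, m ∈ p.support) : G.dist x y = G.dist x m + G.dist m y := by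
  classical
  refine le_antisymm hG.dist_triangle ?_
  obtain ⟨p, hp⟩ := hG.exists_walk_length_eq_dist x y
  have hsplit := congrArg Walk.length (p.take_spec (h p))
  rw [Walk.length_append] at hsplit
  have := dist_le (p.takeUntil m (h p))
  have := dist_le (p.dropUntil m (h p))
  omega

theorem Reachable.deleteEdges_or {a x : V} (h : G.Reachable x a) (b : V) :
    (G.deleteEdges {s(a, b)}).Reachable x a ∨ (G.deleteEdges {s(a, b)}).Reachable x b := by
  obtain ⟨p⟩ := h
  induction p with
  | nil => exact Or.inl .rfl
  | @cons x y a h q ih =>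
    by_cases he : s(x, y) = s(a, b)
    · rcases Sym2.eq_iff.mp he with ⟨rfl, -⟩ | ⟨rfl, -⟩
      · exact Or.inl .rfl
      · exact Or.inr .rfl
    · have hadj : (G.deleteEdges {s(a, b)}).Adj x y := by
        rw [deleteEdges_adj, Set.mem_singleton_iff]
        exact ⟨h, he⟩
      exact ih.imp hadj.reachable.trans hadj.reachable.trans

theorem Connected.dist_eq_add_of_not_reachable_deleteEdges (hG : G.Connected) {a b x y : V}
    (h : ¬(G.deleteEdges {s(a, b)}).Reachable x y) :
    G.dist x y = G.dist x a + G.dist a y ∧ G.dist x y = G.dist x b + G.dist b y := by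
  have hmem : ∀ p : G.Walk x y, s(a, b) ∈ p.edges := fun p => by
    by_contra hp
    exact h (reachable_deleteEdges_iff_exists_walk.mpr ⟨p, hp⟩)
  exact ⟨hG.dist_eq_add_of_forall_mem_support fun p => p.fst_mem_support_of_mem_edges (hmem p),
    hG.dist_eq_add_of_forall_mem_support fun p => p.snd_mem_support_of_mem_edges (hmem p)⟩

namespace IsBridge

variable {a b x y : V}

theorem swap (hb : G.IsBridge s(a, b)) : G.IsBridge s(b, a) := by
  rwa [Sym2.eq_swap]

theorem dist_eq_add_one_of_reachable (hG : G.Connected) (hb : G.IsBridge s(a, b))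
    (hx : (G.deleteEdges {s(a, b)}).Reachable a x) : G.dist b x = G.dist a x + 1 := by
  have hbx : ¬(G.deleteEdges {s(a, b)}).Reachable b x := fun h => hb (hx.trans h.symm)
  rw [(hG.dist_eq_add_of_not_reachable_deleteEdges hbx).1, dist_comm,
    dist_eq_one_iff_adj.mpr (hb.reachable_iff_adj.mp (hG a b)), add_comm]

theorem reachable_iff_dist_eq (hG : G.Connected) (hb : G.IsBridge s(a, b)) :
    (G.deleteEdges {s(a, b)}).Reachable a x ↔ G.dist b x = G.dist a x + 1 := by
  refine ⟨hb.dist_eq_add_one_of_reachable hG, fun hd => ?_⟩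
  refine (((hG x a).deleteEdges_or b).resolve_right fun hxb => ?_).symm
  rw [Sym2.eq_swap] at hxb
  have := hb.swap.dist_eq_add_one_of_reachable hG hxb.symm
  omega

theorem dist_eq_add_one_or (hG : G.Connected) (hb : G.IsBridge s(a, b)) (x : V) :
    G.dist b x = G.dist a x + 1 ∨ G.dist a x = G.dist b x + 1 := by
  refine ((hG x a).deleteEdges_or b).imp
    (fun hxa => hb.dist_eq_add_one_of_reachable hG hxa.symm) fun hxb => ?_
  rw [Sym2.eq_swap] at hxb
  exact hb.swap.dist_eq_add_one_of_reachable hG hxb.symm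

/-- Distances across a bridge `ab`, from `x` on the side of `a` to `y` on the side of `b`. -/
theorem dist_eq_add_one_add (hG : G.Connected) (hb : G.IsBridge s(a, b))
    (hx : G.dist b x = G.dist a x + 1) (hy : G.dist a y = G.dist b y + 1) :
    G.dist x y = G.dist a x + 1 + G.dist b y := by
  have hax := (hb.reachable_iff_dist_eq hG).mpr hx
  have hby := (hb.swap.reachable_iff_dist_eq hG).mpr hy
  rw [Sym2.eq_swap] at hby
  have hxy : ¬(G.deleteEdges {s(a, b)}).Reachable x y := fun h =>
    hb (hax.trans (h.trans hby.symm))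
  rw [(hG.dist_eq_add_of_not_reachable_deleteEdges hxy).2, dist_comm, hx]

end IsBridge

/-- If `ℓ` had a neighbour `m` besides the first step `p` of a geodesic to `v`, then `v` would
lie beyond the bridge `ℓm`, and the geodesic from `p` to `v` would pass through `ℓ` and `m`. -/
theorem degree_eq_one_of_forall_isBridge [Fintype V] [DecidableRel G.Adj] (hG : G.Connected)
    {v ℓ : V} (hℓ : ℓ ≠ v) (hbr : ∀ y, G.Adj ℓ y → G.IsBridge s(ℓ, y))
    (hmax : ∀ y, G.Adj ℓ y → G.dist y v ≤ G.dist ℓ v) : G.degree ℓ = 1 := by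
  obtain ⟨p, hℓp, hp⟩ := hG.exists_adj_dist_add_one_eq hℓ
  refine degree_eq_one_iff_existsUnique_adj.mpr ⟨p, hℓp, fun m hℓm => ?_⟩
  by_contra hmp
  have hb := hbr m hℓm
  have hℓp' : G.dist ℓ p = 1 := dist_eq_one_iff_adj.mpr hℓp
  have hpside : G.dist m p = G.dist ℓ p + 1 :=
    (hb.dist_eq_add_one_or hG p).resolve_right fun h => hmp ((hG.dist_eq_zero_iff).mp (by omega))
  have hvside : G.dist ℓ v = G.dist m v + 1 :=
    (hb.dist_eq_add_one_or hG v).resolve_left fun h => by have := hmax m hℓm; omega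
  have := hb.dist_eq_add_one_add hG hpside hvside
  omega

theorem exists_degree_eq_one_mem [Fintype V] [DecidableRel G.Adj] (hG : G.Connected) {v : V}
    {S : Set V} (hne : S.Nonempty)
    (hS : ∀ x ∈ S, x ≠ v ∧ ∀ y, G.Adj x y → G.IsBridge s(x, y))
    (hfar : ∀ x ∈ S, ∀ y, G.Adj x y → G.dist x v < G.dist y v → y ∈ S) :
    ∃ ℓ ∈ S, G.degree ℓ = 1 := by
  obtain ⟨ℓ, hℓS, hℓmax⟩ := S.exists_max_image (G.dist · v) S.toFinite hne
  refine ⟨ℓ, hℓS, degree_eq_one_of_forall_isBridge hG (hS ℓ hℓS).1 (hS ℓ hℓS).2 fun y hy => ?_⟩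
  by_contra! h
  exact absurd (hℓmax y (hfar ℓ hℓS y hy h)) (not_le.mpr h)

/-- A gate in the sense of gated sets of metric graph theory. For the cycle of a unicyclic graph,
the gate of `u` is the cycle vertex at which the tree containing `u` is attached. -/
def IsGate (G : SimpleGraph V) (S : Set V) (u a : V) : Prop :=
  a ∈ S ∧ ∀ x ∈ S, G.dist u x = G.dist u a + G.dist a x

/-- `t` can stand in for `w` in a doubly resolving pair: `d(z, t) - d(z, w)` is the constant
`d(w, t)` for every `z` in `S` or not gated at `w`. -/
def IsProxy (G : SimpleGraph V) (S : Set V) (t w : V) : Prop :=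
  ∀ z, z ∈ S ∨ ¬G.IsGate S z w → G.dist z t = G.dist z w + G.dist w t

theorem doublyResolves_of_isProxy {S : Set V} {x y tx ty u v : V} (hx : G.IsProxy S tx x)
    (hy : G.IsProxy S ty y) (hu : u ∈ S) (hv : v ∈ S) (h : doublyResolves G x y u v) :
    doublyResolves G tx ty u v := by
  have := hx u (Or.inl hu)
  have := hx v (Or.inl hv)
  have := hy u (Or.inl hu)
  have := hy v (Or.inl hv)
  unfold doublyResolves at *
  omega

theorem isGate_self {S : Set V} {u : V} (hu : u ∈ S) : G.IsGate S u u :=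
  ⟨hu, fun x _ => by rw [dist_self, zero_add]⟩

theorem IsGate.unique (hG : G.Connected) {S : Set V} {u a b : V} (ha : G.IsGate S u a)
    (hb : G.IsGate S u b) : a = b := by
  have h₁ := ha.2 b hb.1
  have h₂ := hb.2 a ha.1
  have := dist_comm (G := G) (u := a) (v := b)
  exact hG.dist_eq_zero_iff.mp (by omega)

namespace Walk

theorem IsCycle.card_support_toFinset [DecidableEq V] {u : V} {p : G.Walk u u}
    (hp : p.IsCycle) : p.support.toFinset.card = p.length := by
  have hsupp : p.support.toFinset = p.support.tail.toFinset := by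
    rw [← p.cons_tail_support, List.toFinset_cons, List.tail_cons,
      Finset.insert_eq_of_mem (List.mem_toFinset.mpr (p.end_mem_tail_support hp.not_nil))]
  rw [hsupp, List.toFinset_card_of_nodup hp.support_nodup, List.length_tail, length_support]
  rfl

theorem reachable_deleteEdges_of_mem_support {u v x y : V} (c : G.Walk u v) {e : Sym2 V}
    (he : e ∉ c.edges) (hx : x ∈ c.support) (hy : y ∈ c.support) :
    (G.deleteEdges {e}).Reachable x y := by
  classical
  refine ⟨((c.takeUntil x hx).reverse.append (c.takeUntil y hy)).toDeleteEdge e fun h => he ?_⟩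
  simp only [edges_append, edges_reverse, List.mem_append, List.mem_reverse] at h
  exact h.elim (c.edges_takeUntil_subset_edges hx ·) (c.edges_takeUntil_subset_edges hy ·)

/-- Cycles are compared through their vertex sets, so `c` is the unique cycle of `G` up to
starting point and orientation. -/
def IsUniqueCycle [DecidableEq V] {v₀ : V} (c : G.Walk v₀ v₀) : Prop :=
  c.IsCycle ∧ ∀ (u : V) (c' : G.Walk u u), c'.IsCycle → c'.support.toFinset = c.support.toFinset

end Walk

namespace Walk.IsUniqueCycle

variable [DecidableEq V] {v₀ : V} {c : G.Walk v₀ v₀}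

theorem mem_support_iff (hC : c.IsUniqueCycle) {u x : V} {p : G.Walk u u} (hp : p.IsCycle) :
    x ∈ p.support ↔ x ∈ c.support := by
  rw [← List.mem_toFinset, hC.2 u p hp, List.mem_toFinset]

theorem isBridge (hC : c.IsUniqueCycle) {x y : V} (hx : x ∉ c.support) (hxy : G.Adj x y) :
    G.IsBridge s(x, y) :=
  (isBridge_iff_forall_cycle_notMem hxy).mpr fun _ p hp he =>
    hx ((hC.mem_support_iff hp).mp (p.fst_mem_support_of_mem_edges he))

/-- The edge `gu` is a bridge not on the cycle, so the whole cycle lies on the side of `x₀`. -/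
theorem dist_eq_add_one (hG : G.Connected) (hC : c.IsUniqueCycle) {u g x₀ x : V}
    (hu : u ∉ c.support) (hgu : G.Adj g u) (hx₀ : x₀ ∈ c.support)
    (hlt : G.dist g x₀ < G.dist u x₀) (hx : x ∈ c.support) :
    G.dist u x = G.dist g x + 1 := by
  have hb := (hC.isBridge hu hgu.symm).swap
  have hgx₀ : (G.deleteEdges {s(g, u)}).Reachable g x₀ :=
    (hb.reachable_iff_dist_eq hG).mpr ((hb.dist_eq_add_one_or hG x₀).resolve_right (by omega))
  have hx₀x : (G.deleteEdges {s(g, u)}).Reachable x₀ x :=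
    c.reachable_deleteEdges_of_mem_support (fun h => hu (c.snd_mem_support_of_mem_edges h)) hx₀ hx
  exact hb.dist_eq_add_one_of_reachable hG (hgx₀.trans hx₀x)

theorem dist_eq_add_one_of_adj (hG : G.Connected) (hC : c.IsUniqueCycle) {w z x : V}
    (hw : w ∈ c.support) (hz : z ∉ c.support) (hwz : G.Adj w z) (hx : x ∈ c.support) :
    G.dist z x = G.dist w x + 1 :=
  hC.dist_eq_add_one hG hz hwz hw (by rw [dist_self, dist_eq_one_iff_adj.mpr hwz.symm]; omega) hx

/-- A chord, together with one of the two arcs of the cycle, would form a cycle missing a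
vertex of the other arc; so the other arc is a single edge. -/
theorem mem_edges_of_adj (hC : c.IsUniqueCycle) {x y : V} (hx : x ∈ c.support)
    (hy : y ∈ c.support) (hxy : G.Adj x y) : s(x, y) ∈ c.edges := by
  rw [← (c.rotate_edges x hx).mem_iff]
  set c' := c.rotate x hx
  have hc' : c'.IsCycle := hC.1.rotate hx
  have hy' : y ∈ c'.support := (hC.mem_support_iff hc').mpr hy
  rw [← c'.take_spec hy', edges_append, List.mem_append, Sym2.eq_swap]
  by_cases h₁ : s(y, x) ∈ (c'.takeUntil y hy').edges
  · exact Or.inl h₁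
  right
  have hq : (cons hxy.symm (c'.takeUntil y hy')).IsCycle :=
    (cons_isCycle_iff _ _).mpr ⟨hc'.isPath_takeUntil hy', h₁⟩
  have hlen : (cons hxy.symm (c'.takeUntil y hy')).length = c'.length := by
    rw [← hq.card_support_toFinset, ← hc'.card_support_toFinset, hC.2 _ _ hq, hC.2 _ _ hc']
  have hsplit := congrArg length (c'.take_spec hy')
  rw [length_append] at hsplit
  rw [length_cons] at hlen
  set p := c'.dropUntil y hy'
  have hp : p.length = 1 := by omega
  have hsnd : p.snd = x := by rw [snd, ← hp, getVert_length]
  simpa [hsnd] using p.mk_start_snd_mem_edges (not_nil_iff_lt_length.mpr (by omega))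

theorem exists_adj_notMem_support [Fintype V] [DecidableRel G.Adj] (hC : c.IsUniqueCycle)
    {w : V} (hw : w ∈ c.support) (hdeg : G.degree w ≠ 2) : ∃ z, G.Adj w z ∧ z ∉ c.support := by
  by_contra! h
  have hnbr : G.neighborSet w = c.toSubgraph.neighborSet w := by
    ext z
    refine ⟨fun hz => ?_, fun hz => c.toSubgraph.adj_sub hz⟩
    rw [Subgraph.mem_neighborSet, ← Subgraph.mem_edgeSet, mem_edges_toSubgraph]
    exact hC.mem_edges_of_adj hw (h z hz) hz
  apply hdeg
  rw [← card_neighborFinset_eq_degree, ← Set.ncard_coe_finset, coe_neighborFinset, hnbr]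
  exact hC.1.ncard_neighborSet_toSubgraph_eq_two hw

theorem exists_isGate (hG : G.Connected) (hC : c.IsUniqueCycle) (u : V) :
    ∃ a, G.IsGate {x | x ∈ c.support} u a := by
  induction hn : G.dist u v₀ using Nat.strong_induction_on generalizing u with
  | _ n ih =>
  by_cases hu : u ∈ c.support
  · exact ⟨u, isGate_self hu⟩
  obtain ⟨g, hug, hg⟩ :=
    hG.exists_adj_dist_add_one_eq fun h : u = v₀ => hu (h ▸ c.start_mem_support)
  have hstep := fun x (hx : x ∈ c.support) =>
    hC.dist_eq_add_one hG hu hug.symm c.start_mem_support (by omega) hx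
  obtain ⟨a, ha, hga⟩ := ih _ (by omega) g rfl
  refine ⟨a, ha, fun x hx => ?_⟩
  rw [hstep x hx, hstep a ha, hga x hx]
  ring

theorem isGate_of_dist_eq_add (hG : G.Connected) (hC : c.IsUniqueCycle) {u v A : V}
    (hu : u ∉ c.support) (hA : G.IsGate {x | x ∈ c.support} u A)
    (hv : G.dist v A = G.dist v u + G.dist u A) : G.IsGate {x | x ∈ c.support} v A := by
  obtain ⟨g, hug, hg⟩ := hG.exists_adj_dist_add_one_eq fun h : u = A => hu (h ▸ hA.1)
  have hb := (hC.isBridge hu hug).swap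
  have := dist_comm (G := G) (u := v) (v := u)
  have := dist_comm (G := G) (u := v) (v := g)
  have hvside : G.dist g v = G.dist u v + 1 := by
    refine (hb.dist_eq_add_one_or hG v).resolve_left fun h => ?_
    have := hG.dist_triangle (u := v) (v := g) (w := A)
    omega
  refine ⟨hA.1, fun x hx => ?_⟩
  have hxside := hC.dist_eq_add_one hG hu hug.symm hA.1 (by omega) hx
  have := hb.dist_eq_add_one_add hG hxside hvside
  have := hA.2 x hx
  have := dist_comm (G := G) (u := v) (v := x)
  omega

theorem dist_toSubgraph_coe (hG : G.Connected) (hC : c.IsUniqueCycle)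
    (a b : c.toSubgraph.verts) : c.toSubgraph.coe.dist a b = G.dist a b := by
  have hcoe : c.toSubgraph.coe.Connected := c.toSubgraph_connected.coe
  have hmem (x : c.toSubgraph.verts) : (x : V) ∈ c.support := c.mem_verts_toSubgraph.mp x.2
  refine le_antisymm ?_ ?_
  · induction hn : G.dist a b using Nat.strong_induction_on generalizing a with
    | _ n ih =>
    by_cases hab : a = b
    · simp [hab]
    obtain ⟨g, hag, hg⟩ := hG.exists_adj_dist_add_one_eq fun h => hab (Subtype.ext h)
    have hgc : g ∈ c.support := by
      by_contra hgc
      have := hC.dist_eq_add_one_of_adj hG (hmem a) hgc hag (hmem b)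
      omega
    let g' : c.toSubgraph.verts := ⟨g, c.mem_verts_toSubgraph.mpr hgc⟩
    have hadj : c.toSubgraph.coe.Adj a g' := by
      change c.toSubgraph.Adj a g
      rw [← Subgraph.mem_edgeSet, mem_edges_toSubgraph]
      exact hC.mem_edges_of_adj (hmem a) hgc hag
    have := ih (G.dist g b) (by omega) g' rfl
    have := hcoe.dist_triangle (u := a) (v := g') (w := b)
    rw [dist_eq_one_iff_adj.mpr hadj] at this
    omega
  · obtain ⟨q, hq⟩ := hcoe.exists_walk_length_eq_dist a b
    calc G.dist a b ≤ (q.map c.toSubgraph.hom).length := dist_le _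
      _ = c.toSubgraph.coe.dist a b := by rw [length_map, hq]

theorem doublyResolves_toSubgraph_coe_iff (hG : G.Connected) (hC : c.IsUniqueCycle)
    {x y u v : c.toSubgraph.verts} :
    doublyResolves c.toSubgraph.coe x y u v ↔ doublyResolves G x y u v := by
  simp only [doublyResolves, hC.dist_toSubgraph_coe hG]

/-- A leaf in the tree hanging from the cycle at `w` through `z₀`. -/
theorem exists_degree_eq_one_dist_lt [Fintype V] [DecidableRel G.Adj] (hG : G.Connected)
    (hC : c.IsUniqueCycle) {w z₀ : V} (hw : w ∈ c.support) (hz₀ : z₀ ∉ c.support)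
    (hwz₀ : G.Adj w z₀) : ∃ ℓ, G.degree ℓ = 1 ∧ G.dist z₀ ℓ < G.dist w ℓ := by
  refine (exists_degree_eq_one_mem hG (v := w) (S := {x | G.dist z₀ x < G.dist w x})
    ⟨z₀, by simp [dist_eq_one_iff_adj.mpr hwz₀]⟩ ?_ ?_).imp fun ℓ ⟨hℓS, hℓ⟩ => ⟨hℓ, hℓS⟩
  · intro x (hx : G.dist z₀ x < G.dist w x)
    refine ⟨by rintro rfl; simp at hx, fun y => hC.isBridge fun h => ?_⟩
    have := hC.dist_eq_add_one_of_adj hG hw hz₀ hwz₀ h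
    omega
  · intro x (hx : G.dist z₀ x < G.dist w x) y hxy hlt
    have := hG.dist_triangle (u := z₀) (v := x) (w := y)
    rw [dist_eq_one_iff_adj.mpr hxy] at this
    rw [dist_comm (u := x), dist_comm (u := y)] at hlt
    show G.dist z₀ y < G.dist w y
    omega

theorem isProxy_of_dist_lt (hG : G.Connected) (hC : c.IsUniqueCycle) {w z₀ ℓ : V}
    (hw : w ∈ c.support) (hz₀ : z₀ ∉ c.support) (hwz₀ : G.Adj w z₀)
    (hℓ : G.dist z₀ ℓ < G.dist w ℓ) : G.IsProxy {x | x ∈ c.support} ℓ w := by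
  have hb := (hC.isBridge hz₀ hwz₀.symm).swap
  have hcyc := fun x (hx : x ∈ c.support) => hC.dist_eq_add_one_of_adj hG hw hz₀ hwz₀ hx
  have hℓside : G.dist w ℓ = G.dist z₀ ℓ + 1 :=
    (hb.dist_eq_add_one_or hG ℓ).resolve_left fun h => by omega
  intro z hz
  have hzside : G.dist z₀ z = G.dist w z + 1 := by
    refine (hb.dist_eq_add_one_or hG z).resolve_right fun h => ?_
    rcases hz with hz | hz
    · have := hcyc z hz
      omega
    · refine hz ⟨hw, fun x hx => ?_⟩
      have := hb.dist_eq_add_one_add hG (hcyc x hx) h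
      have := dist_comm (G := G) (u := x) (v := z)
      have := dist_comm (G := G) (u := w) (v := z)
      omega
  have := hb.dist_eq_add_one_add hG hzside hℓside
  rw [dist_comm (u := w) (v := z)] at this
  omega

theorem exists_isProxy [Fintype V] [DecidableRel G.Adj] (hG : G.Connected)
    (hC : c.IsUniqueCycle) {w : V} (hw : w ∈ c.support) :
    ∃ t, (G.degree t = 1 ∨ t = w ∧ G.degree w = 2) ∧ G.IsProxy {x | x ∈ c.support} t w := by
  by_cases hdeg : G.degree w = 2
  · exact ⟨w, Or.inr ⟨rfl, hdeg⟩, fun z _ => by rw [dist_self, add_zero]⟩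
  obtain ⟨z₀, hwz₀, hz₀⟩ := hC.exists_adj_notMem_support hw hdeg
  obtain ⟨ℓ, hℓ, hℓz₀⟩ := hC.exists_degree_eq_one_dist_lt hG hw hz₀ hwz₀
  exact ⟨ℓ, Or.inl hℓ, hC.isProxy_of_dist_lt hG hw hz₀ hwz₀ hℓz₀⟩

/-- By `hv`, `v` does not lie behind `u` as seen from the cycle, so walking away from `v`
starting at `u` never reaches the cycle and ends at a leaf. -/
theorem exists_degree_eq_one_dist_eq_add [Fintype V] [DecidableRel G.Adj] (hG : G.Connected)
    (hC : c.IsUniqueCycle) {u v A : V} (hA : G.IsGate {x | x ∈ c.support} u A)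
    (hv : G.dist v A ≠ G.dist v u + G.dist u A) :
    ∃ ℓ, G.degree ℓ = 1 ∧ G.dist v ℓ = G.dist v u + G.dist u ℓ := by
  have hvA := hG.dist_triangle (u := v) (v := u) (w := A)
  refine (exists_degree_eq_one_mem hG (v := v)
    (S := {x | G.dist v x = G.dist v u + G.dist u x}) ⟨u, by simp⟩ ?_ ?_).imp
    fun ℓ ⟨hℓS, hℓ⟩ => ⟨hℓ, hℓS⟩
  · intro x (hx : G.dist v x = G.dist v u + G.dist u x)
    refine ⟨?_, fun y => hC.isBridge fun h => ?_⟩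
    · rintro rfl
      rw [dist_self] at hx
      obtain rfl : x = u := hG.dist_eq_zero_iff.mp (by omega)
      simp at hv
    · have := hA.2 x h
      have := hG.dist_triangle (u := v) (v := A) (w := x)
      omega
  · intro x (hx : G.dist v x = G.dist v u + G.dist u x) y hxy hlt
    have := hG.dist_triangle (u := u) (v := x) (w := y)
    have := hG.dist_triangle (u := v) (v := u) (w := y)
    rw [dist_eq_one_iff_adj.mpr hxy] at *
    rw [dist_comm (u := x), dist_comm (u := y)] at hlt
    show G.dist v y = G.dist v u + G.dist u y
    omega

theorem exists_degree_eq_one_doublyResolves_of_ne [Fintype V] [DecidableRel G.Adj]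
    (hG : G.Connected) (hC : c.IsUniqueCycle) {u v A w t : V}
    (hA : G.IsGate {x | x ∈ c.support} u A) (hv : G.dist v A ≠ G.dist v u + G.dist u A)
    (hw : w ∈ c.support) (hwA : w ≠ A) (ht : G.IsProxy {x | x ∈ c.support} t w) :
    ∃ ℓ, G.degree ℓ = 1 ∧ doublyResolves G ℓ t u v := by
  obtain ⟨ℓ, hℓ, hvℓ⟩ := hC.exists_degree_eq_one_dist_eq_add hG hA hv
  have hut := ht u (Or.inr fun h => hwA (h.unique hG hA))
  have huw := hA.2 w hw
  have := hG.dist_triangle (u := v) (v := w) (w := t)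
  have := hG.dist_triangle (u := v) (v := A) (w := w)
  have := hG.dist_triangle (u := v) (v := u) (w := A)
  refine ⟨ℓ, hℓ, ?_⟩
  unfold doublyResolves
  omega

theorem exists_degree_eq_one_doublyResolves [Fintype V] [DecidableRel G.Adj]
    (hG : G.Connected) (hC : c.IsUniqueCycle) {u v A w t : V} (hu : u ∉ c.support)
    (huv : u ≠ v) (hA : G.IsGate {x | x ∈ c.support} u A) (hw : w ∈ c.support) (hwA : w ≠ A)
    (ht : G.IsProxy {x | x ∈ c.support} t w) :
    ∃ ℓ, G.degree ℓ = 1 ∧ doublyResolves G ℓ t u v := by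
  by_cases hv : G.dist v A = G.dist v u + G.dist u A
  · have hvA := hC.isGate_of_dist_eq_add hG hu hA hv
    have := hG.pos_dist_of_ne huv.symm
    obtain ⟨ℓ, hℓ, hres⟩ :=
      hC.exists_degree_eq_one_doublyResolves_of_ne hG (v := u) hvA (by omega) hw hwA ht
    exact ⟨ℓ, hℓ, doublyResolves_comm.mp hres⟩
  · exact hC.exists_degree_eq_one_doublyResolves_of_ne hG hA hv hw hwA ht

end Walk.IsUniqueCycle

end SimpleGraph

/-- Let `G` be a connected unicyclic graph with unique cycle `c`, and let `W` be a
doubly resolving set for the cycle (as a graph in its own right). If `U` is the set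
of vertices of `W` of degree `2` in `G`, then `L(G) ∪ U` is a doubly resolving set
for `G`, where `L(G)` is the set of leaves of `G`. -/
theorem stmt_13 {V : Type*} [Fintype V] [DecidableEq V] (G : SimpleGraph V)
    [DecidableRel G.Adj] (hG : G.Connected)
    (v₀ : V) (c : G.Walk v₀ v₀) (hc : c.IsCycle)
    (huniq : ∀ (u : V) (c' : G.Walk u u), c'.IsCycle →
      c'.support.toFinset = c.support.toFinset)
    (W : Set ↑c.toSubgraph.verts) (hW : IsDoublyResolvingSet c.toSubgraph.coe W) :
    IsDoublyResolvingSet G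
      ({v : V | G.degree v = 1} ∪
        Subtype.val '' {w | w ∈ W ∧ G.degree (w : V) = 2}) := by
  have hC : c.IsUniqueCycle := ⟨hc, huniq⟩
  have hmem (w : c.toSubgraph.verts) : (w : V) ∈ c.support := c.mem_verts_toSubgraph.mp w.2
  set T := {v : V | G.degree v = 1} ∪ Subtype.val '' {w | w ∈ W ∧ G.degree (w : V) = 2}
  have hproxy (w) (hw : w ∈ W) : ∃ t ∈ T, G.IsProxy {x | x ∈ c.support} t w := by
    obtain ⟨t, ht, hprox⟩ := hC.exists_isProxy hG (hmem w)
    exact ⟨t, ht.imp_right fun h => ⟨w, ⟨hw, h.2⟩, h.1.symm⟩, hprox⟩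
  have hWn : (Subtype.val '' W).Nontrivial :=
    (hW.nontrivial (u := ⟨v₀, c.start_mem_verts_toSubgraph⟩)
      (v := ⟨c.snd, c.mem_verts_toSubgraph.mpr (c.getVert_mem_support 1)⟩)
      fun h => (c.adj_snd hc.not_nil).ne (congrArg Subtype.val h)).image Subtype.val_injective
  have hoff (u v) (huv : u ≠ v) (hu : u ∉ c.support) :
      ∃ x ∈ T, ∃ y ∈ T, doublyResolves G x y u v := by
    obtain ⟨A, hA⟩ := hC.exists_isGate hG u
    obtain ⟨_, ⟨w, hw, rfl⟩, hwA⟩ := hWn.exists_ne A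
    obtain ⟨t, htT, ht⟩ := hproxy w hw
    obtain ⟨ℓ, hℓ, hres⟩ := hC.exists_degree_eq_one_doublyResolves hG hu huv hA (hmem w) hwA ht
    exact ⟨ℓ, Or.inl hℓ, t, htT, hres⟩
  intro u v huv
  by_cases hu : u ∈ c.support
  · by_cases hv : v ∈ c.support
    · obtain ⟨x, hx, y, hy, hres⟩ := hW ⟨u, c.mem_verts_toSubgraph.mpr hu⟩
        ⟨v, c.mem_verts_toSubgraph.mpr hv⟩ fun h => huv (congrArg Subtype.val h)
      obtain ⟨tx, htxT, htx⟩ := hproxy x hx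
      obtain ⟨ty, htyT, hty⟩ := hproxy y hy
      exact ⟨tx, htxT, ty, htyT, doublyResolves_of_isProxy htx hty hu hv
        ((hC.doublyResolves_toSubgraph_coe_iff hG).mp hres)⟩
    · obtain ⟨x, hx, y, hy, hres⟩ := hoff v u huv.symm hv
      exact ⟨x, hx, y, hy, doublyResolves_comm.mp hres⟩
  · exact hoff u v huv hu
end
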